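/- Let K₁ and K₂ be nonempty closed convex sets in ℝⁿ, let r and m be integers with 0 ≤ r ≤ m − 3 ≤ n − 4, and let S ⊂ ℝⁿ be a linear subspace of dimension r. Then K₁ and K₂ are homothetic if and only if for every m-dimensional plane L of ℝⁿ whose direction subspace contains S (i.e., every m-dimensional plane containing a translate of S) the orthogonal projections π_L(K₁) and π_L(K₂) are homothetic (where the homothety ratio may depend on L). -/

import Mathlib

/-- Nonempty sets `X₁` and `X₂` in `ℝⁿ` are *homothetic* provided
`X₁ = z + λ • X₂` for some point `z` and some scalar `λ ≠ 0`. -/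
def Homothetic {n : ℕ} (X₁ X₂ : Set (EuclideanSpace ℝ (Fin n))) : Prop :=
  ∃ (z : EuclideanSpace ℝ (Fin n)) (l : ℝ), l ≠ 0 ∧ X₁ = (fun x => z + l • x) '' X₂

/-- The orthogonal projection of `ℝⁿ` onto the plane `p + L`. -/
noncomputable def planeProj {n : ℕ} (p : EuclideanSpace ℝ (Fin n))
    (L : Submodule ℝ (EuclideanSpace ℝ (Fin n))) (x : EuclideanSpace ℝ (Fin n)) :
    EuclideanSpace ℝ (Fin n) :=
  p + (L.orthogonalProjectionOnto (x - p) : EuclideanSpace ℝ (Fin n))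

/-!
A closed convex set `K` is determined by its support function `h_K u = sup_{x ∈ K} ⟪x, u⟫`
together with the cone of directions where it is finite, and `z + c • K` has support function
`u ↦ ⟪z, u⟫ + h_K (c • u)`. Since `r + 3 ≤ m`, any three vectors lie in an `m`-dimensional
subspace containing `S`; projecting onto it does not change the support functions in its directions,
so on the span of any three vectors `h_{K₁}` is the support function of a homothetic copy
`z + c • K₂`, with `z` and `c` depending on the span.

The linear term `⟪z, ·⟫` drops out of the additivity defects `h u + h v - h (u + v)`, so gluing
the local relations is an argument about functions on monoids known on every submonoid generated
by three elements. If some direction `a` has `h_{K₂} a < ∞ = h_{K₂} (-a)`, every triple containing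
such an anchor forces `c > 0`, and chaining triples through anchors makes the defects of `h_{K₁}`
and `h_{K₂}` globally proportional. Otherwise the finite directions form a subspace, the widths
`h u + h (-u)` fix `|c|` globally, and a three-triple argument fixes its sign. In both cases
`h_{K₁} - h_{K₂} (c • ·)` ends up additive and positively homogeneous on a cone, hence the
restriction of a linear functional `⟪z, ·⟫`.
-/

section AddDefect

variable {V : Type*} [AddCommMonoid V]

def addDefect (f : V → ℝ) (x y : V) : ℝ := f x + f y - f (x + y)

def AdditiveOn (f : V → ℝ) (W : AddSubmonoid V) : Prop :=
  ∀ p ∈ W, ∀ q ∈ W, f (p + q) = f p + f q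

def DefectProportionalOn (F G : V → ℝ) (W : AddSubmonoid V) : Prop :=
  ∃ l > 0, ∀ p ∈ W, ∀ q ∈ W, addDefect F p q = l * addDefect G p q

lemma AdditiveOn.sub {f g : V → ℝ} {W : AddSubmonoid V} (hf : AdditiveOn f W)
    (hg : AdditiveOn g W) : AdditiveOn (fun u => f u - g u) W := fun p hp q hq => by
  simp only [hf p hp q hq, hg p hp q hq]
  ring

lemma addDefect_comm (f : V → ℝ) (x y : V) : addDefect f x y = addDefect f y x := by
  rw [addDefect, addDefect, add_comm y x]; ring

lemma addDefect_add_left (f : V → ℝ) (x c y : V) :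
    addDefect f (x + c) y = addDefect f x y - addDefect f x c + addDefect f (x + y) c := by
  simp only [addDefect]; rw [add_right_comm x c y]; ring

lemma left_mem_closure_triple (x y w : V) :
    x ∈ AddSubmonoid.closure ({x, y, w} : Set V) :=
  AddSubmonoid.subset_closure (by simp)

lemma middle_mem_closure_triple (x y w : V) :
    y ∈ AddSubmonoid.closure ({x, y, w} : Set V) :=
  AddSubmonoid.subset_closure (by simp)

lemma right_mem_closure_triple (x y w : V) :
    w ∈ AddSubmonoid.closure ({x, y, w} : Set V) :=
  AddSubmonoid.subset_closure (by simp)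

theorem additiveOn_or_additiveOn_of_forall_closure (D : AddSubmonoid V) (o s : V → ℝ)
    (h : ∀ x ∈ D, ∀ y ∈ D, ∀ w ∈ D, AdditiveOn o (AddSubmonoid.closure {x, y, w}) ∨
      AdditiveOn s (AddSubmonoid.closure {x, y, w})) :
    AdditiveOn o D ∨ AdditiveOn s D := by
  by_contra! hcon
  simp only [AdditiveOn, not_forall] at hcon
  obtain ⟨⟨b₁, hb₁, b₂, hb₂, hb⟩, ⟨s₁, hs₁, s₂, hs₂, hs⟩⟩ := hcon
  have ho : ∀ c ∈ D, AdditiveOn o (AddSubmonoid.closure {s₁, s₂, c}) := fun c hc =>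
    (h s₁ hs₁ s₂ hs₂ c hc).resolve_right fun hs' =>
      hs (hs' s₁ (left_mem_closure_triple _ _ _) s₂ (middle_mem_closure_triple _ _ _))
  have hs' : ∀ c ∈ D, AdditiveOn s (AddSubmonoid.closure {b₁, b₂, c}) := fun c hc =>
    (h b₁ hb₁ b₂ hb₂ c hc).resolve_left fun ho' =>
      hb (ho' b₁ (left_mem_closure_triple _ _ _) b₂ (middle_mem_closure_triple _ _ _))
  set u := s₁ + b₁
  have ho₁ := ho b₁ hb₁ s₁ (left_mem_closure_triple _ _ _) b₁ (right_mem_closure_triple _ _ _)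
  have ho₂ := ho (b₁ + b₂) (add_mem hb₁ hb₂) s₁ (left_mem_closure_triple _ _ _) (b₁ + b₂)
    (right_mem_closure_triple _ _ _)
  -- `o` is not additive at `(u, b₂)`, hence `s` is additive on the closure of `u, b₂, s₂`
  have hsu : AdditiveOn s (AddSubmonoid.closure {u, b₂, s₂}) := by
    refine (h u (add_mem hs₁ hb₁) b₂ hb₂ s₂ hs₂).resolve_left fun ho' => hb ?_
    have := ho' u (left_mem_closure_triple _ _ _) b₂ (middle_mem_closure_triple _ _ _)
    rw [add_assoc] at this
    linarith
  have e₁ := hsu u (left_mem_closure_triple _ _ _) s₂ (right_mem_closure_triple _ _ _)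
  have e₂ := hs' s₁ hs₁ s₁ (right_mem_closure_triple _ _ _) b₁ (left_mem_closure_triple _ _ _)
  have e₃ := hs' (s₁ + s₂) (add_mem hs₁ hs₂) (s₁ + s₂) (right_mem_closure_triple _ _ _) b₁
    (left_mem_closure_triple _ _ _)
  rw [add_right_comm] at e₁
  exact hs (by linarith)

noncomputable def defectRatio (F G : V → ℝ) (x y : V) : ℝ := addDefect F x y / addDefect G x y

lemma DefectProportionalOn.defectRatio_eq {F G : V → ℝ} {W : AddSubmonoid V}
    (hW : DefectProportionalOn F G W) {p q p' q' : V} (hp : p ∈ W) (hq : q ∈ W) (hp' : p' ∈ W)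
    (hq' : q' ∈ W) (h : addDefect G p q ≠ 0) (h' : addDefect G p' q' ≠ 0) :
    defectRatio F G p q = defectRatio F G p' q' := by
  obtain ⟨l, -, hl⟩ := hW
  rw [defectRatio, defectRatio, hl p hp q hq, hl p' hp' q' hq', mul_div_cancel_right₀ _ h,
    mul_div_cancel_right₀ _ h']

section Anchored

variable {D : AddSubmonoid V} {A : Set V} {F G : V → ℝ}

lemma exists_anchored_defectRatio_eq (hAD : A ⊆ D)
    (hG : ∀ p ∈ D, ∀ q ∈ D, 0 ≤ addDefect G p q)
    (hloc : ∀ x ∈ D, ∀ y ∈ D, ∀ a ∈ A, DefectProportionalOn F G (AddSubmonoid.closure {x, y, a}))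
    (hA : ∀ a ∈ A, ∀ d ∈ D, a + d ∈ A) {a₀ : V} (ha₀ : a₀ ∈ A) {u v : V} (hu : u ∈ D) (hv : v ∈ D)
    (huv : addDefect G u v ≠ 0) :
    ∃ a ∈ A, ∃ w ∈ D, addDefect G a w ≠ 0 ∧ defectRatio F G a w = defectRatio F G u v := by
  have hW := hloc u hu v hv a₀ ha₀
  have hu' := left_mem_closure_triple u v a₀
  have hv' := middle_mem_closure_triple u v a₀
  have ha' := right_mem_closure_triple u v a₀
  by_cases hua : addDefect G u a₀ = 0
  · -- then `(a₀ + u, v)` is an anchored pair with a larger defect than `(u, v)`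
    have hpos : addDefect G (a₀ + u) v ≠ 0 := by
      have := hG (u + v) (add_mem hu hv) a₀ (hAD ha₀)
      have := addDefect_add_left G u a₀ v
      rw [add_comm a₀ u]
      exact (lt_of_le_of_ne (hG u hu v hv) (Ne.symm huv)).trans_le (by linarith) |>.ne'
    exact ⟨a₀ + u, hA a₀ ha₀ u hu, v, hv, hpos,
      hW.defectRatio_eq (add_mem ha' hu') hv' hu' hv' hpos huv⟩
  · rw [addDefect_comm] at hua
    exact ⟨a₀, ha₀, u, hu, hua, hW.defectRatio_eq ha' hu' hu' hv' hua huv⟩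

lemma defectRatio_eq_of_anchored (hAD : A ⊆ D)
    (hG : ∀ p ∈ D, ∀ q ∈ D, 0 ≤ addDefect G p q)
    (hloc : ∀ x ∈ D, ∀ y ∈ D, ∀ a ∈ A, DefectProportionalOn F G (AddSubmonoid.closure {x, y, a}))
    (hA : ∀ a ∈ A, ∀ d ∈ D, a + d ∈ A) {a₁ w₁ a₂ w₂ : V} (ha₁ : a₁ ∈ A) (hw₁ : w₁ ∈ D)
    (ha₂ : a₂ ∈ A) (hw₂ : w₂ ∈ D) (h₁ : addDefect G a₁ w₁ ≠ 0) (h₂ : addDefect G a₂ w₂ ≠ 0) :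
    defectRatio F G a₁ w₁ = defectRatio F G a₂ w₂ := by
  have hD₁ := hAD ha₁
  have hD₂ := hAD ha₂
  have W₁ := hloc a₁ hD₁ w₁ hw₁ a₂ ha₂
  have W₂ := hloc a₂ hD₂ w₂ hw₂ a₁ ha₁
  have ha₁W₁ := left_mem_closure_triple a₁ w₁ a₂
  have hw₁W₁ := middle_mem_closure_triple a₁ w₁ a₂
  have ha₂W₁ := right_mem_closure_triple a₁ w₁ a₂
  have ha₂W₂ := left_mem_closure_triple a₂ w₂ a₁
  have hw₂W₂ := middle_mem_closure_triple a₂ w₂ a₁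
  have ha₁W₂ := right_mem_closure_triple a₂ w₂ a₁
  by_cases c₁ : addDefect G a₂ a₁ = 0
  swap
  · exact (W₁.defectRatio_eq ha₁W₁ hw₁W₁ ha₂W₁ ha₁W₁ h₁ c₁).trans
      (W₂.defectRatio_eq ha₂W₂ ha₁W₂ ha₂W₂ hw₂W₂ c₁ h₂)
  by_cases c₂ : addDefect G a₂ w₁ = 0
  swap
  · exact (W₁.defectRatio_eq ha₁W₁ hw₁W₁ ha₂W₁ hw₁W₁ h₁ c₂).trans
      ((hloc w₁ hw₁ w₂ hw₂ a₂ ha₂).defectRatio_eq (right_mem_closure_triple _ _ _)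
        (left_mem_closure_triple _ _ _) (right_mem_closure_triple _ _ _)
        (middle_mem_closure_triple _ _ _) c₂ h₂)
  by_cases c₃ : addDefect G a₂ (a₁ + w₁) = 0
  swap
  · exact (W₁.defectRatio_eq ha₁W₁ hw₁W₁ ha₂W₁ (add_mem ha₁W₁ hw₁W₁) h₁ c₃).trans
      ((hloc (a₁ + w₁) (add_mem hD₁ hw₁) w₂ hw₂ a₂ ha₂).defectRatio_eq
        (right_mem_closure_triple _ _ _) (left_mem_closure_triple _ _ _)
        (right_mem_closure_triple _ _ _) (middle_mem_closure_triple _ _ _) c₃ h₂)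
  -- otherwise both pairs are linked to pairs based at the anchor `a₁ + a₂`
  have hp₁ : addDefect G (a₁ + a₂) w₁ ≠ 0 := by
    rwa [addDefect_add_left, addDefect_comm G a₁ a₂, c₁, addDefect_comm G (a₁ + w₁) a₂, c₃,
      sub_zero, add_zero]
  have hp₂ : addDefect G (a₁ + a₂) w₂ ≠ 0 := by
    have := hG (a₂ + w₂) (add_mem hD₂ hw₂) a₁ hD₁
    rw [add_comm, addDefect_add_left, c₁]
    exact ((lt_of_le_of_ne (hG a₂ hD₂ w₂ hw₂) (Ne.symm h₂)).trans_le (by linarith)).ne'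
  calc defectRatio F G a₁ w₁ = defectRatio F G (a₁ + a₂) w₁ :=
        W₁.defectRatio_eq ha₁W₁ hw₁W₁ (add_mem ha₁W₁ ha₂W₁) hw₁W₁ h₁ hp₁
    _ = defectRatio F G (a₁ + a₂) w₂ :=
        (hloc w₁ hw₁ w₂ hw₂ (a₁ + a₂) (hA a₁ ha₁ a₂ hD₂)).defectRatio_eq
          (right_mem_closure_triple _ _ _) (left_mem_closure_triple _ _ _)
          (right_mem_closure_triple _ _ _) (middle_mem_closure_triple _ _ _) hp₁ hp₂
    _ = defectRatio F G a₂ w₂ :=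
        W₂.defectRatio_eq (add_mem ha₁W₂ ha₂W₂) hw₂W₂ ha₂W₂ hw₂W₂ hp₂ h₂

theorem defectProportionalOn_of_forall_closure (hAD : A ⊆ D) (hA : ∀ a ∈ A, ∀ d ∈ D, a + d ∈ A)
    (hAne : A.Nonempty) (hG : ∀ p ∈ D, ∀ q ∈ D, 0 ≤ addDefect G p q)
    (hloc : ∀ x ∈ D, ∀ y ∈ D, ∀ a ∈ A, DefectProportionalOn F G (AddSubmonoid.closure {x, y, a})) :
    DefectProportionalOn F G D := by
  obtain ⟨a₀, ha₀⟩ := hAne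
  have hF : ∀ p ∈ D, ∀ q ∈ D, addDefect G p q = 0 → addDefect F p q = 0 := fun p hp q hq h0 => by
    obtain ⟨l, -, hl⟩ := hloc p hp q hq a₀ ha₀
    rw [hl p (left_mem_closure_triple _ _ _) q (middle_mem_closure_triple _ _ _), h0, mul_zero]
  by_cases hzero : ∀ p ∈ D, ∀ q ∈ D, addDefect G p q = 0
  · exact ⟨1, one_pos, fun p hp q hq => by rw [hF p hp q hq (hzero p hp q hq), hzero p hp q hq,
      mul_zero]⟩
  push Not at hzero
  obtain ⟨u₀, hu₀, v₀, hv₀, huv₀⟩ := hzero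
  obtain ⟨l₀, hl₀, hl₀W⟩ := hloc u₀ hu₀ v₀ hv₀ a₀ ha₀
  refine ⟨l₀, hl₀, fun p hp q hq => ?_⟩
  by_cases hpq : addDefect G p q = 0
  · rw [hF p hp q hq hpq, hpq, mul_zero]
  obtain ⟨a, ha, w, hw, haw, hρ⟩ :=
    exists_anchored_defectRatio_eq hAD hG hloc hA ha₀ hp hq hpq
  obtain ⟨a', ha', w', hw', haw', hρ'⟩ :=
    exists_anchored_defectRatio_eq hAD hG hloc hA ha₀ hu₀ hv₀ huv₀
  have : defectRatio F G p q = l₀ := by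
    rw [← hρ, defectRatio_eq_of_anchored hAD hG hloc hA ha hw ha' hw' haw haw', hρ', defectRatio,
      hl₀W u₀ (left_mem_closure_triple _ _ _) v₀ (middle_mem_closure_triple _ _ _),
      mul_div_cancel_right₀ _ huv₀]
  rwa [defectRatio, div_eq_iff hpq] at this

end Anchored

end AddDefect

open RealInnerProductSpace Pointwise

variable {E : Type*} [NormedAddCommGroup E] [InnerProductSpace ℝ E]

lemma AdditiveOn.map_sum_smul {D : PointedCone ℝ E} {g : E → ℝ}
    (hadd : AdditiveOn g D.toAddSubmonoid)
    (hsmul : ∀ t : ℝ, 0 ≤ t → ∀ x ∈ D, g (t • x) = t * g x) {ι : Type*} (s : Finset ι)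
    {t : ι → ℝ} {d : ι → E} (ht : ∀ i ∈ s, 0 ≤ t i) (hd : ∀ i ∈ s, d i ∈ D) :
    g (∑ i ∈ s, t i • d i) = ∑ i ∈ s, t i * g (d i) := by
  classical
  induction s using Finset.induction_on with
  | empty => simpa using hsmul 0 le_rfl 0 D.zero_mem
  | insert i s hi ih =>
    simp only [Finset.mem_insert, forall_eq_or_imp] at ht hd
    rw [Finset.sum_insert hi, Finset.sum_insert hi,
      hadd _ (D.smul_mem ht.1 hd.1) _ (D.sum_mem fun j hj => D.smul_mem (ht.2 j hj) (hd.2 j hj)),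
      hsmul _ ht.1 _ hd.1, ih ht.2 hd.2]

theorem PointedCone.exists_inner_eq_of_additiveOn [FiniteDimensional ℝ E] (D : PointedCone ℝ E)
    (g : E → ℝ) (hadd : AdditiveOn g D.toAddSubmonoid)
    (hsmul : ∀ t : ℝ, 0 ≤ t → ∀ x ∈ D, g (t • x) = t * g x) :
    ∃ z : E, ∀ x ∈ D, g x = ⟪z, x⟫ := by
  let π : (D →₀ ℝ) →ₗ[ℝ] E := Finsupp.linearCombination ℝ (↑)
  let ψ : (D →₀ ℝ) →ₗ[ℝ] ℝ := Finsupp.linearCombination ℝ fun d => g d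
  -- split a relation `∑ c d • d = 0` into positive and negative parts, which are cone elements
  have hker : LinearMap.ker π ≤ LinearMap.ker ψ := by
    intro c hc
    rw [LinearMap.mem_ker, Finsupp.linearCombination_apply, Finsupp.sum] at hc ⊢
    have hpos := hadd.map_sum_smul hsmul c.support (t := fun d => max (c d) 0)
      (fun _ _ => le_max_right _ _) (fun d _ => d.2)
    have hneg := hadd.map_sum_smul hsmul c.support (t := fun d => max (-c d) 0)
      (fun _ _ => le_max_right _ _) (fun d _ => d.2)
    have hsplit : ∀ d : D, c d = max (c d) 0 - max (-c d) 0 := fun d => by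
      rcases le_total (c d) 0 with h | h <;> simp [h]
    have heq : ∑ d ∈ c.support, max (c d) 0 • (d : E) =
        ∑ d ∈ c.support, max (-c d) 0 • (d : E) := by
      rw [← sub_eq_zero, ← Finset.sum_sub_distrib, ← hc]
      exact Finset.sum_congr rfl fun d _ => by rw [← sub_smul, ← hsplit]
    simp only [smul_eq_mul]
    rw [heq, hneg] at hpos
    calc ∑ d ∈ c.support, c d * g d
        = ∑ d ∈ c.support, (max (c d) 0 * g d - max (-c d) 0 * g d) :=
          Finset.sum_congr rfl fun d _ => by rw [← sub_mul, ← hsplit]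
      _ = 0 := by rw [Finset.sum_sub_distrib, hpos, sub_self]
  obtain ⟨φ, hφ⟩ := LinearMap.exists_extend
    ((LinearMap.ker π).liftQ ψ hker ∘ₗ π.quotKerEquivRange.symm.toLinearMap)
  refine ⟨(InnerProductSpace.toDual ℝ E).symm (LinearMap.toContinuousLinearMap φ), fun x hx => ?_⟩
  have hπ : π (Finsupp.single ⟨x, hx⟩ 1) = x := by simp [π]
  have := LinearMap.congr_fun hφ ⟨_, LinearMap.mem_range_self π (Finsupp.single ⟨x, hx⟩ 1)⟩
  rw [LinearMap.comp_apply, LinearMap.comp_apply, LinearEquiv.coe_coe,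
    LinearMap.quotKerEquivRange_symm_apply_image, Submodule.mkQ_apply,
    Submodule.liftQ_apply] at this
  simp only [Submodule.coe_subtype, hπ] at this
  rw [InnerProductSpace.toDual_symm_apply, LinearMap.coe_toContinuousLinearMap', this]
  simp [ψ]

def barrierCone (K : Set E) : PointedCone ℝ E where
  carrier := {u | BddAbove ((fun x => ⟪x, u⟫) '' K)}
  add_mem' := by
    rintro u v ⟨a, ha⟩ ⟨b, hb⟩
    refine ⟨a + b, ?_⟩
    rintro _ ⟨x, hx, rfl⟩
    simp only [inner_add_right]
    exact add_le_add (ha ⟨x, hx, rfl⟩) (hb ⟨x, hx, rfl⟩)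
  zero_mem' := ⟨0, by rintro _ ⟨x, -, rfl⟩; simp⟩
  smul_mem' := by
    rintro ⟨t, ht⟩ u ⟨a, ha⟩
    refine ⟨t * a, ?_⟩
    rintro _ ⟨x, hx, rfl⟩
    simp only [Nonneg.mk_smul, real_inner_smul_right]
    exact mul_le_mul_of_nonneg_left (ha ⟨x, hx, rfl⟩) ht

lemma mem_barrierCone {K : Set E} {u : E} :
    u ∈ barrierCone K ↔ BddAbove ((fun x => ⟪x, u⟫) '' K) := Iff.rfl

/-- Meaningful only for nonempty `K` and `u ∈ barrierCone K`; elsewhere `sSup` returns junk. -/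
noncomputable def supportFun (K : Set E) (u : E) : ℝ := sSup ((fun x => ⟪x, u⟫) '' K)

variable {K : Set E} {u v : E}

lemma inner_le_supportFun (hu : u ∈ barrierCone K) {x : E} (hx : x ∈ K) :
    ⟪x, u⟫ ≤ supportFun K u :=
  le_csSup hu ⟨x, hx, rfl⟩

lemma supportFun_le (hK : K.Nonempty) {b : ℝ} (h : ∀ x ∈ K, ⟪x, u⟫ ≤ b) : supportFun K u ≤ b :=
  csSup_le (hK.image _) (by rintro _ ⟨x, hx, rfl⟩; exact h x hx)

lemma supportFun_add_le (hK : K.Nonempty) (hu : u ∈ barrierCone K) (hv : v ∈ barrierCone K) :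
    supportFun K (u + v) ≤ supportFun K u + supportFun K v :=
  supportFun_le hK fun x hx => by
    rw [inner_add_right]
    exact add_le_add (inner_le_supportFun hu hx) (inner_le_supportFun hv hx)

lemma supportFun_smul {t : ℝ} (ht : 0 ≤ t) (K : Set E) (u : E) :
    supportFun K (t • u) = t * supportFun K u := by
  have : (fun x => ⟪x, t • u⟫) '' K = t • (fun x => ⟪x, u⟫) '' K := by
    rw [← Set.image_smul, Set.image_image]
    simp only [real_inner_smul_right, smul_eq_mul]
  rw [supportFun, this, Real.sSup_smul_of_nonneg ht, smul_eq_mul, supportFun]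

lemma supportFun_add_of_width_eq_zero (hK : K.Nonempty) (hu : u ∈ barrierCone K)
    (hv : v ∈ barrierCone K) (hv' : -v ∈ barrierCone K)
    (hw : supportFun K v + supportFun K (-v) = 0) :
    supportFun K (u + v) = supportFun K u + supportFun K v := by
  have h₁ := supportFun_add_le hK hu hv
  have h₂ := supportFun_add_le hK (add_mem hu hv) hv'
  rw [add_neg_cancel_right] at h₂
  linarith

lemma image_inner_homothety (z : E) (c : ℝ) (K : Set E) (u : E) :
    (fun x => ⟪x, u⟫) '' ((fun y => z + c • y) '' K) =
      (⟪z, u⟫ + ·) '' ((fun x => ⟪x, c • u⟫) '' K) := by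
  simp only [Set.image_image, inner_add_left, real_inner_smul_left, real_inner_smul_right]

lemma barrierCone_supportFun_of_image_inner_eq {T : Set E} {a : ℝ} (hT : T.Nonempty)
    (h : (fun x => ⟪x, u⟫) '' K = (a + ·) '' ((fun x => ⟪x, v⟫) '' T)) :
    (u ∈ barrierCone K ↔ v ∈ barrierCone T) ∧
      (u ∈ barrierCone K → supportFun K u = a + supportFun T v) := by
  rw [mem_barrierCone, mem_barrierCone, supportFun, supportFun, h]
  have hiff : BddAbove ((a + ·) '' ((fun x => ⟪x, v⟫) '' T)) ↔
      BddAbove ((fun x => ⟪x, v⟫) '' T) := (OrderIso.addLeft a).bddAbove_image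
  exact ⟨hiff, fun hb => ((OrderIso.addLeft a).map_csSup' (hT.image _) (hiff.mp hb)).symm⟩

lemma mem_barrierCone_neg : u ∈ barrierCone (-K) ↔ -u ∈ barrierCone K := by
  simp only [mem_barrierCone, ← Set.image_neg_eq_neg, Set.image_image, inner_neg_left,
    ← inner_neg_right]

lemma supportFun_neg : supportFun (-K) u = supportFun K (-u) := by
  simp only [supportFun, ← Set.image_neg_eq_neg, Set.image_image, inner_neg_left,
    ← inner_neg_right]

lemma subset_of_forall_supportFun_le [CompleteSpace E] {T : Set E} (hT : T.Nonempty)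
    (hTc : IsClosed T) (hTv : Convex ℝ T)
    (h : ∀ u ∈ barrierCone T, u ∈ barrierCone K ∧ supportFun K u ≤ supportFun T u) : K ⊆ T := by
  intro x hx
  by_contra hxT
  obtain ⟨f, c, hf, hfx⟩ := geometric_hahn_banach_closed_point hTv hTc hxT
  set w := (InnerProductSpace.toDual ℝ E).symm f
  have hw : ∀ y, ⟪y, w⟫ = f y := fun y => by
    rw [real_inner_comm, InnerProductSpace.toDual_symm_apply]
  have hTw : supportFun T w ≤ c := supportFun_le hT fun y hy => (hw y).trans_le (hf y hy).le
  obtain ⟨hwK, hle⟩ := h w ⟨c, by rintro _ ⟨y, hy, rfl⟩; exact (hw y).trans_le (hf y hy).le⟩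
  have := inner_le_supportFun hwK hx
  rw [hw] at this
  linarith

lemma eq_of_barrierCone_supportFun [CompleteSpace E] {T : Set E} (hK : K.Nonempty)
    (hT : T.Nonempty) (hKc : IsClosed K) (hTc : IsClosed T) (hKv : Convex ℝ K)
    (hTv : Convex ℝ T) (hB : ∀ u, u ∈ barrierCone K ↔ u ∈ barrierCone T)
    (hs : ∀ u ∈ barrierCone K, supportFun K u = supportFun T u) : K = T :=
  (subset_of_forall_supportFun_le hT hTc hTv fun u hu =>
      ⟨(hB u).2 hu, (hs u ((hB u).2 hu)).le⟩).antisymm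
    (subset_of_forall_supportFun_le hK hKc hKv fun u hu => ⟨(hB u).1 hu, (hs u hu).ge⟩)

lemma PointedCone.smul_mem_iff_of_neg_mem {C : PointedCone ℝ E} (hC : ∀ u ∈ C, -u ∈ C) {c : ℝ}
    (hc : c ≠ 0) {u : E} : c • u ∈ C ↔ u ∈ C := by
  rcases hc.lt_or_gt with hc | hc
  · have hneg : -u ∈ C ↔ u ∈ C := ⟨fun h => by simpa using hC _ h, hC u⟩
    rw [← neg_smul_neg, C.smul_mem_iff (neg_pos.2 hc), hneg]
  · exact C.smul_mem_iff hc

lemma mem_span_and_mem_of_mem_closure_triple {C : PointedCone ℝ E} {x y w p : E} (hx : x ∈ C)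
    (hy : y ∈ C) (hw : w ∈ C) (hp : p ∈ AddSubmonoid.closure {x, y, w}) :
    p ∈ Submodule.span ℝ {x, y, w} ∧ p ∈ C := by
  have : AddSubmonoid.closure {x, y, w} ≤
      (Submodule.span ℝ {x, y, w}).toAddSubmonoid ⊓ C.toAddSubmonoid := by
    rw [AddSubmonoid.closure_le]
    rintro q hq
    refine ⟨Submodule.subset_span hq, ?_⟩
    rcases hq with rfl | rfl | rfl <;> assumption
  exact this hp

/-- On `W`, the support function of `K₁`, together with its domain, is that of `z + c • K₂`. -/
def HomotheticSupportOn (K₁ K₂ : Set E) (z : E) (c : ℝ) (W : Set E) : Prop :=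
  ∀ u ∈ W, (u ∈ barrierCone K₁ ↔ c • u ∈ barrierCone K₂) ∧
    (u ∈ barrierCone K₁ → supportFun K₁ u = ⟪z, u⟫ + supportFun K₂ (c • u))

variable {K₁ K₂ : Set E} {z : E} {c : ℝ} {W : Set E}

lemma homotheticSupportOn_of_image_inner_eq (hK₂ : K₂.Nonempty)
    (h : ∀ u ∈ W, (fun x => ⟪x, u⟫) '' K₁ = (fun x => ⟪x, u⟫) '' ((fun y => z + c • y) '' K₂)) :
    HomotheticSupportOn K₁ K₂ z c W := fun u hu =>
  barrierCone_supportFun_of_image_inner_eq hK₂ ((h u hu).trans (image_inner_homothety z c K₂ u))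

lemma homotheticSupportOn_neg_iff :
    HomotheticSupportOn K₁ (-K₂) z c W ↔ HomotheticSupportOn K₁ K₂ z (-c) W := by
  simp only [HomotheticSupportOn, mem_barrierCone_neg, supportFun_neg, neg_smul]

lemma HomotheticSupportOn.eq_image [CompleteSpace E] (h : HomotheticSupportOn K₁ K₂ z c Set.univ)
    (hc : c ≠ 0) (hK₁ : K₁.Nonempty) (hK₂ : K₂.Nonempty) (hK₁c : IsClosed K₁) (hK₂c : IsClosed K₂)
    (hK₁v : Convex ℝ K₁) (hK₂v : Convex ℝ K₂) : K₁ = (fun y => z + c • y) '' K₂ := by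
  have hT u := barrierCone_supportFun_of_image_inner_eq hK₂ (image_inner_homothety z c K₂ u)
  have himage : (fun y => z + c • y) '' K₂ = z +ᵥ c • K₂ := by
    rw [← Set.image_smul, ← Set.image_vadd, Set.image_image]; rfl
  refine eq_of_barrierCone_supportFun hK₁ (hK₂.image _) hK₁c
    (himage ▸ (hK₂c.smul_of_ne_zero hc).vadd z) hK₁v (hK₂v.affinity z c) (fun u => ?_)
    fun u hu => ?_
  · rw [(h u trivial).1, (hT u).1]
  · rw [(h u trivial).2 hu, (hT u).2 ((hT u).1.mpr ((h u trivial).1.mp hu))]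

lemma HomotheticSupportOn.width_eq {W : Submodule ℝ E} (h : HomotheticSupportOn K₁ K₂ z c W)
    {u : E} (hu : u ∈ W) (hu₁ : u ∈ barrierCone K₁) (hu₁' : -u ∈ barrierCone K₁) :
    supportFun K₁ u + supportFun K₁ (-u) = |c| * (supportFun K₂ u + supportFun K₂ (-u)) := by
  rw [(h u hu).2 hu₁, (h (-u) (W.neg_mem hu)).2 hu₁', inner_neg_right]
  rcases le_total 0 c with hc | hc
  · rw [abs_of_nonneg hc, supportFun_smul hc K₂ u, supportFun_smul hc K₂ (-u)]
    ring
  · rw [abs_of_nonpos hc, ← neg_smul_neg c u, ← neg_smul_neg c (-u), neg_neg,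
      supportFun_smul (neg_nonneg.2 hc) K₂ (-u), supportFun_smul (neg_nonneg.2 hc) K₂ u]
    ring

lemma HomotheticSupportOn.additiveOn (h : HomotheticSupportOn K₁ K₂ z c W) {S : AddSubmonoid E}
    (hS : ∀ p ∈ S, p ∈ W ∧ p ∈ barrierCone K₁) :
    AdditiveOn (fun u => supportFun K₁ u - supportFun K₂ (c • u)) S := fun p hp q hq => by
  have e : ∀ r ∈ S, supportFun K₁ r - supportFun K₂ (c • r) = ⟪z, r⟫ := fun r hr => by
    rw [(h r (hS r hr).1).2 (hS r hr).2]
    ring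
  simp only [e p hp, e q hq, e _ (add_mem hp hq), inner_add_right]

lemma HomotheticSupportOn.pos_of_anchor (h : HomotheticSupportOn K₁ K₂ z c W) (hc : c ≠ 0)
    {a : E} (ha : a ∈ W) (ha₁ : a ∈ barrierCone K₁) (ha₂ : -a ∉ barrierCone K₂) : 0 < c := by
  refine hc.lt_or_gt.resolve_left fun hneg => ha₂ ?_
  have := (barrierCone K₂).smul_mem (inv_nonneg.2 (neg_pos.2 hneg).le) ((h a ha).1.mp ha₁)
  rwa [smul_smul, show (-c)⁻¹ * c = -1 by field_simp, neg_one_smul] at this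

lemma HomotheticSupportOn.defectProportionalOn (h : HomotheticSupportOn K₁ K₂ z c W) (hc : 0 < c)
    {S : AddSubmonoid E} (hS : ∀ p ∈ S, p ∈ W ∧ p ∈ barrierCone K₁) :
    DefectProportionalOn (supportFun K₁) (supportFun K₂) S := by
  refine ⟨c, hc, fun p hp q hq => ?_⟩
  have e : ∀ r ∈ S, supportFun K₁ r = ⟪z, r⟫ + c * supportFun K₂ r := fun r hr => by
    rw [(h r (hS r hr).1).2 (hS r hr).2, supportFun_smul hc.le]
  simp only [addDefect, e p hp, e q hq, e _ (add_mem hp hq), inner_add_right]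
  ring

lemma addDefect_supportFun_nonneg (hK : K.Nonempty) (hu : u ∈ barrierCone K)
    (hv : v ∈ barrierCone K) : 0 ≤ addDefect (supportFun K) u v :=
  sub_nonneg.2 (supportFun_add_le hK hu hv)

lemma additiveOn_supportFun_smul_of_width_eq_zero (hK : K.Nonempty) {S : AddSubmonoid E}
    (hS : ∀ p ∈ S, p ∈ barrierCone K ∧ -p ∈ barrierCone K ∧
      supportFun K p + supportFun K (-p) = 0) (t : ℝ) :
    AdditiveOn (fun u => supportFun K (t • u)) S := by
  intro p hp q hq
  obtain ⟨hp₁, hp₂, -⟩ := hS p hp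
  obtain ⟨hq₁, hq₂, hq₃⟩ := hS q hq
  dsimp only
  rcases le_total 0 t with ht | ht
  · rw [supportFun_smul ht, supportFun_smul ht, supportFun_smul ht,
      supportFun_add_of_width_eq_zero hK hp₁ hq₁ hq₂ hq₃, mul_add]
  · have hq₃' : supportFun K (-q) + supportFun K (-(-q)) = 0 := by rwa [neg_neg, add_comm]
    rw [← neg_smul_neg t (p + q), ← neg_smul_neg t p, ← neg_smul_neg t q, neg_add,
      supportFun_smul (neg_nonneg.2 ht), supportFun_smul (neg_nonneg.2 ht),
      supportFun_smul (neg_nonneg.2 ht),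
      supportFun_add_of_width_eq_zero hK hp₂ hq₂ (by rwa [neg_neg]) hq₃', mul_add]

lemma exists_width_eq_mul_of_neg_mem
    (hloc : ∀ u v w : E, ∃ z c, c ≠ 0 ∧
      HomotheticSupportOn K₁ K₂ z c (Submodule.span ℝ {u, v, w}))
    (hB : ∀ u, u ∈ barrierCone K₁ ↔ u ∈ barrierCone K₂)
    (hneg : ∀ u ∈ barrierCone K₂, -u ∈ barrierCone K₂) :
    ∃ l > 0, ∀ u ∈ barrierCone K₂, supportFun K₁ u + supportFun K₁ (-u) =
      l * (supportFun K₂ u + supportFun K₂ (-u)) := by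
  have hwidth : ∀ {W : Submodule ℝ E} {z c}, HomotheticSupportOn K₁ K₂ z c W →
      ∀ u ∈ W, u ∈ barrierCone K₂ → supportFun K₁ u + supportFun K₁ (-u) =
        |c| * (supportFun K₂ u + supportFun K₂ (-u)) := fun h u hu hu₂ =>
    h.width_eq hu ((hB u).2 hu₂) ((hB _).2 (hneg u hu₂))
  by_cases hzero : ∀ u ∈ barrierCone K₂, supportFun K₂ u + supportFun K₂ (-u) = 0
  · refine ⟨1, one_pos, fun u hu => ?_⟩
    obtain ⟨z, c, -, h⟩ := hloc u u u
    rw [hwidth h u (Submodule.subset_span (by simp)) hu, hzero u hu, mul_zero, mul_zero]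
  push Not at hzero
  obtain ⟨u₀, hu₀, hw₀⟩ := hzero
  obtain ⟨z₀, c₀, hc₀, h₀⟩ := hloc u₀ u₀ u₀
  refine ⟨|c₀|, abs_pos.2 hc₀, fun u hu => ?_⟩
  obtain ⟨z, c, -, h⟩ := hloc u u₀ u₀
  have hc : |c| = |c₀| := mul_right_cancel₀ hw₀ <|
    (hwidth h u₀ (Submodule.subset_span (by simp)) hu₀).symm.trans
      (hwidth h₀ u₀ (Submodule.subset_span (by simp)) hu₀)
  rw [← hc, hwidth h u (Submodule.subset_span (by simp)) hu]

lemma HomotheticSupportOn.additiveOn_or_additiveOn {W : Submodule ℝ E}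
    (h : HomotheticSupportOn K₁ K₂ z c W) (hK₁ : K₁.Nonempty) (hK₂ : K₂.Nonempty)
    (hB : ∀ u, u ∈ barrierCone K₁ ↔ u ∈ barrierCone K₂)
    (hneg : ∀ u ∈ barrierCone K₂, -u ∈ barrierCone K₂) {l : ℝ} (hl : 0 < l)
    (hwidth : ∀ u ∈ barrierCone K₂, supportFun K₁ u + supportFun K₁ (-u) =
      l * (supportFun K₂ u + supportFun K₂ (-u)))
    {S : AddSubmonoid E} (hS : ∀ p ∈ S, p ∈ W ∧ p ∈ barrierCone K₂) :
    AdditiveOn (fun u => supportFun K₁ u - supportFun K₂ (l • u)) S ∨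
      AdditiveOn (fun u => supportFun K₁ u - supportFun K₂ ((-l) • u)) S := by
  have hS₁ : ∀ p ∈ S, p ∈ W ∧ p ∈ barrierCone K₁ := fun p hp => (hS p hp).imp_right (hB p).2
  by_cases hcl : |c| = l
  · rcases (abs_eq hl.le).1 hcl with rfl | rfl
    · exact Or.inl (h.additiveOn hS₁)
    · exact Or.inr (h.additiveOn hS₁)
  -- otherwise the widths of `K₂`, and hence those of `K₁`, vanish on `S`
  have hflat₂ : ∀ p ∈ S, p ∈ barrierCone K₂ ∧ -p ∈ barrierCone K₂ ∧
      supportFun K₂ p + supportFun K₂ (-p) = 0 := fun p hp => by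
    obtain ⟨hpW, hp₂⟩ := hS p hp
    have e := h.width_eq hpW ((hB p).2 hp₂) ((hB _).2 (hneg p hp₂))
    rw [hwidth p hp₂] at e
    exact ⟨hp₂, hneg p hp₂, (mul_eq_mul_right_iff.1 e).resolve_left (Ne.symm hcl)⟩
  have hflat₁ : ∀ p ∈ S, p ∈ barrierCone K₁ ∧ -p ∈ barrierCone K₁ ∧
      supportFun K₁ p + supportFun K₁ (-p) = 0 := fun p hp => by
    obtain ⟨hp₂, hp₂', hw⟩ := hflat₂ p hp
    exact ⟨(hB p).2 hp₂, (hB _).2 hp₂', by rw [hwidth p hp₂, hw, mul_zero]⟩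
  have hadd₁ : AdditiveOn (supportFun K₁) S := by
    simpa using additiveOn_supportFun_smul_of_width_eq_zero hK₁ hflat₁ 1
  exact Or.inl (hadd₁.sub (additiveOn_supportFun_smul_of_width_eq_zero hK₂ hflat₂ l))

section FiniteDimensional

variable [FiniteDimensional ℝ E]

lemma exists_homotheticSupportOn_univ_of_additiveOn
    (hB : ∀ u, u ∈ barrierCone K₁ ↔ c • u ∈ barrierCone K₂)
    (hadd : AdditiveOn (fun u => supportFun K₁ u - supportFun K₂ (c • u))
      (barrierCone K₁).toAddSubmonoid) :
    ∃ z, HomotheticSupportOn K₁ K₂ z c Set.univ := by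
  obtain ⟨z, hz⟩ := (barrierCone K₁).exists_inner_eq_of_additiveOn _ hadd fun t ht u _ => by
    rw [smul_comm c t u, supportFun_smul ht, supportFun_smul ht]
    ring
  exact ⟨z, fun u _ => ⟨hB u, fun hu => by linarith [hz u hu]⟩⟩

theorem exists_homotheticSupportOn_univ_of_neg_mem (hK₁ : K₁.Nonempty) (hK₂ : K₂.Nonempty)
    (hloc : ∀ u v w : E, ∃ z c, c ≠ 0 ∧
      HomotheticSupportOn K₁ K₂ z c (Submodule.span ℝ {u, v, w}))
    (hneg : ∀ u ∈ barrierCone K₂, -u ∈ barrierCone K₂) :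
    ∃ z c, c ≠ 0 ∧ HomotheticSupportOn K₁ K₂ z c Set.univ := by
  have hsmul {c : ℝ} (hc : c ≠ 0) (u : E) : c • u ∈ barrierCone K₂ ↔ u ∈ barrierCone K₂ :=
    (barrierCone K₂).smul_mem_iff_of_neg_mem hneg hc
  have hB : ∀ u, u ∈ barrierCone K₁ ↔ u ∈ barrierCone K₂ := fun u => by
    obtain ⟨z, c, hc, h⟩ := hloc u u u
    rw [(h u (Submodule.subset_span (by simp))).1, hsmul hc]
  obtain ⟨l, hl, hwidth⟩ := exists_width_eq_mul_of_neg_mem hloc hB hneg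
  have hwin : ∀ x ∈ (barrierCone K₂).toAddSubmonoid, ∀ y ∈ (barrierCone K₂).toAddSubmonoid,
      ∀ w ∈ (barrierCone K₂).toAddSubmonoid,
        AdditiveOn (fun u => supportFun K₁ u - supportFun K₂ (l • u))
          (AddSubmonoid.closure {x, y, w}) ∨
        AdditiveOn (fun u => supportFun K₁ u - supportFun K₂ ((-l) • u))
          (AddSubmonoid.closure {x, y, w}) := fun x hx y hy w hw => by
    obtain ⟨z, c, -, h⟩ := hloc x y w
    exact h.additiveOn_or_additiveOn hK₁ hK₂ hB hneg hl hwidth fun p hp =>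
      mem_span_and_mem_of_mem_closure_triple hx hy hw hp
  have hB' : barrierCone K₁ = barrierCone K₂ := SetLike.ext hB
  rcases additiveOn_or_additiveOn_of_forall_closure _ _ _ hwin with hadd | hadd
  · obtain ⟨z, h⟩ := exists_homotheticSupportOn_univ_of_additiveOn
      (fun u => by rw [hB, hsmul hl.ne']) (hB' ▸ hadd)
    exact ⟨z, l, hl.ne', h⟩
  · obtain ⟨z, h⟩ := exists_homotheticSupportOn_univ_of_additiveOn
      (fun u => by rw [hB, hsmul (neg_ne_zero.2 hl.ne')]) (hB' ▸ hadd)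
    exact ⟨z, -l, neg_ne_zero.2 hl.ne', h⟩

theorem exists_homotheticSupportOn_univ_of_anchor (hK₂ : K₂.Nonempty)
    (hloc : ∀ u v w : E, ∃ z c, c ≠ 0 ∧
      HomotheticSupportOn K₁ K₂ z c (Submodule.span ℝ {u, v, w}))
    {a₀ : E} (ha₁ : a₀ ∈ barrierCone K₁) (ha₂ : a₀ ∈ barrierCone K₂)
    (ha₂' : -a₀ ∉ barrierCone K₂) :
    ∃ z c, 0 < c ∧ HomotheticSupportOn K₁ K₂ z c Set.univ := by
  have hB : ∀ u, u ∈ barrierCone K₁ ↔ u ∈ barrierCone K₂ := fun u => by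
    obtain ⟨z, c, hc, h⟩ := hloc u a₀ a₀
    rw [(h u (Submodule.subset_span (by simp))).1, (barrierCone K₂).smul_mem_iff
      (h.pos_of_anchor hc (Submodule.subset_span (by simp)) ha₁ ha₂')]
  set A := {a | a ∈ barrierCone K₂ ∧ -a ∉ barrierCone K₂}
  have hA : ∀ a ∈ A, ∀ d ∈ (barrierCone K₂).toAddSubmonoid, a + d ∈ A := fun a ha d hd =>
    ⟨add_mem ha.1 hd, fun h => ha.2 (by simpa using add_mem h hd)⟩
  obtain ⟨l, hl, hdef⟩ := defectProportionalOn_of_forall_closure (fun a ha => ha.1) hA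
    ⟨a₀, ha₂, ha₂'⟩ (fun p hp q hq => addDefect_supportFun_nonneg hK₂ hp hq)
    fun x hx y hy a ha => by
      obtain ⟨z, c, hc, h⟩ := hloc x y a
      refine h.defectProportionalOn (h.pos_of_anchor hc (Submodule.subset_span (by simp))
        ((hB a).2 ha.1) ha.2) fun p hp => ?_
      exact (mem_span_and_mem_of_mem_closure_triple hx hy ha.1 hp).imp_right (hB p).2
  have hadd : AdditiveOn (fun u => supportFun K₁ u - supportFun K₂ (l • u))
      (barrierCone K₁).toAddSubmonoid := fun p hp q hq => by
    have := hdef p ((hB p).1 hp) q ((hB q).1 hq)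
    simp only [addDefect, supportFun_smul hl.le] at this ⊢
    linarith
  obtain ⟨z, h⟩ := exists_homotheticSupportOn_univ_of_additiveOn
    (fun u => by rw [hB, (barrierCone K₂).smul_mem_iff hl]) hadd
  exact ⟨z, l, hl, h⟩

theorem exists_homotheticSupportOn_univ (hK₁ : K₁.Nonempty) (hK₂ : K₂.Nonempty)
    (hloc : ∀ u v w : E, ∃ z c, c ≠ 0 ∧
      HomotheticSupportOn K₁ K₂ z c (Submodule.span ℝ {u, v, w})) :
    ∃ z c, c ≠ 0 ∧ HomotheticSupportOn K₁ K₂ z c Set.univ := by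
  by_cases hneg : ∀ u ∈ barrierCone K₂, -u ∈ barrierCone K₂
  · exact exists_homotheticSupportOn_univ_of_neg_mem hK₁ hK₂ hloc hneg
  push Not at hneg
  obtain ⟨a, ha, ha'⟩ := hneg
  obtain ⟨z, c, hc, h⟩ := hloc a a a
  have haW : a ∈ Submodule.span ℝ {a, a, a} := Submodule.subset_span (by simp)
  rcases hc.lt_or_gt with hc | hc
  · -- replacing `K₂` by `-K₂` makes the scale at `a` positive
    have hloc' : ∀ u v w : E, ∃ z c, c ≠ 0 ∧
        HomotheticSupportOn K₁ (-K₂) z c (Submodule.span ℝ {u, v, w}) := fun u v w => by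
      obtain ⟨z, c, hc, h⟩ := hloc u v w
      exact ⟨z, -c, neg_ne_zero.2 hc, by rwa [homotheticSupportOn_neg_iff, neg_neg]⟩
    have ha₁ : -a ∈ barrierCone K₁ := (h (-a) (Submodule.neg_mem _ haW)).1.mpr <| by
      rw [smul_neg, ← neg_smul]
      exact (barrierCone K₂).smul_mem (neg_pos.2 hc).le ha
    obtain ⟨z, c, hc, h⟩ := exists_homotheticSupportOn_univ_of_anchor hK₂.neg hloc' ha₁
      (by rwa [mem_barrierCone_neg, neg_neg]) (by rwa [mem_barrierCone_neg, neg_neg])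
    exact ⟨z, -c, neg_ne_zero.2 hc.ne', homotheticSupportOn_neg_iff.1 h⟩
  · obtain ⟨z, c, hc, h⟩ := exists_homotheticSupportOn_univ_of_anchor hK₂ hloc
      ((h a haW).1.mpr ((barrierCone K₂).smul_mem hc.le ha)) ha ha'
    exact ⟨z, c, hc.ne', h⟩

end FiniteDimensional

theorem Submodule.exists_le_finrank_eq {K V : Type*} [DivisionRing K] [AddCommGroup V] [Module K V]
    [FiniteDimensional K V] (W : Submodule K V) {k : ℕ} (h₁ : Module.finrank K W ≤ k)
    (h₂ : k ≤ Module.finrank K V) : ∃ L : Submodule K V, W ≤ L ∧ Module.finrank K L = k := by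
  induction k with
  | zero => exact ⟨W, le_rfl, by omega⟩
  | succ k ih =>
    rcases h₁.eq_or_lt with h | h
    · exact ⟨W, le_rfl, h⟩
    obtain ⟨L, hWL, hL⟩ := ih (by omega) (by omega)
    have hLtop : L ≠ ⊤ := by
      rintro rfl
      rw [finrank_top] at hL
      omega
    obtain ⟨x, -, hx⟩ := SetLike.exists_of_lt (lt_top_iff_ne_top.2 hLtop)
    exact ⟨L ⊔ Submodule.span K {x}, hWL.trans le_sup_left,
      by rw [Submodule.finrank_sup_span_singleton hx, hL]⟩

lemma finrank_span_triple_le {K V : Type*} [DivisionRing K] [AddCommGroup V] [Module K V]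
    (u v w : V) : Module.finrank K (Submodule.span K {u, v, w}) ≤ 3 := by
  classical
  have := finrank_span_finset_le_card (R := K) ({u, v, w} : Finset V)
  rw [Set.finrank, Finset.coe_insert, Finset.coe_pair] at this
  exact this.trans Finset.card_le_three

section Euclidean

variable {n : ℕ}

lemma image_inner_planeProj {p u : EuclideanSpace ℝ (Fin n)}
    {L : Submodule ℝ (EuclideanSpace ℝ (Fin n))} (hu : u ∈ L) (K : Set (EuclideanSpace ℝ (Fin n))) :
    (fun x => ⟪x, u⟫) '' (planeProj p L '' K) = (fun x => ⟪x, u⟫) '' K := by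
  rw [Set.image_image]
  refine Set.image_congr fun y _ => ?_
  rw [planeProj, Submodule.coe_orthogonalProjectionOnto_apply, inner_add_left,
    Submodule.inner_starProjection_left_eq_right, Submodule.starProjection_eq_self_iff.2 hu,
    inner_sub_left]
  ring

lemma Homothetic.image_planeProj {K₁ K₂ : Set (EuclideanSpace ℝ (Fin n))} (h : Homothetic K₁ K₂)
    (p : EuclideanSpace ℝ (Fin n)) (L : Submodule ℝ (EuclideanSpace ℝ (Fin n))) :
    Homothetic (planeProj p L '' K₁) (planeProj p L '' K₂) := by
  obtain ⟨z, c, hc, rfl⟩ := h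
  refine ⟨planeProj p L z - c • planeProj p L 0, c, hc, ?_⟩
  rw [Set.image_image, Set.image_image]
  refine Set.image_congr fun y _ => ?_
  simp only [planeProj, zero_sub, map_neg, map_sub, map_add, map_smul, Submodule.coe_add,
    Submodule.coe_sub, Submodule.coe_smul, Submodule.coe_neg]
  module

lemma exists_homotheticSupportOn_of_homothetic_planeProj {K₁ K₂ : Set (EuclideanSpace ℝ (Fin n))}
    (hK₂ : K₂.Nonempty) {p : EuclideanSpace ℝ (Fin n)} {L : Submodule ℝ (EuclideanSpace ℝ (Fin n))}
    (h : Homothetic (planeProj p L '' K₁) (planeProj p L '' K₂)) :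
    ∃ z c, c ≠ 0 ∧ HomotheticSupportOn K₁ K₂ z c L := by
  obtain ⟨z, c, hc, heq⟩ := h
  refine ⟨z, c, hc, homotheticSupportOn_of_image_inner_eq hK₂ fun u hu => ?_⟩
  rw [← image_inner_planeProj hu K₁, heq, image_inner_homothety, image_inner_homothety,
    image_inner_planeProj (L.smul_mem c hu)]

end Euclidean

/-- Closed convex sets `K₁` and `K₂` in `ℝⁿ` are homothetic if and only if, for fixed
`r ≤ m - 3 ≤ n - 4` and a fixed `r`-dimensional subspace `S`, their orthogonal
projections on every `m`-dimensional plane of `ℝⁿ` whose direction contains `S`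
are homothetic. -/
theorem homothetic_iff_projections_through_subspace_homothetic_closed
    (n m r : ℕ) (hrm : r + 3 ≤ m) (hmn : m + 1 ≤ n)
    (S : Submodule ℝ (EuclideanSpace ℝ (Fin n))) (hS : Module.finrank ℝ S = r)
    (K₁ K₂ : Set (EuclideanSpace ℝ (Fin n)))
    (hne₁ : K₁.Nonempty) (hne₂ : K₂.Nonempty)
    (hcl₁ : IsClosed K₁) (hcl₂ : IsClosed K₂)
    (hcv₁ : Convex ℝ K₁) (hcv₂ : Convex ℝ K₂) :
    Homothetic K₁ K₂ ↔
      ∀ (p : EuclideanSpace ℝ (Fin n)) (L : Submodule ℝ (EuclideanSpace ℝ (Fin n))),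
        Module.finrank ℝ L = m → S ≤ L →
        Homothetic (planeProj p L '' K₁) (planeProj p L '' K₂) := by
  refine ⟨fun h p L _ _ => h.image_planeProj p L, fun hproj => ?_⟩
  obtain ⟨z, c, hc, h⟩ := exists_homotheticSupportOn_univ hne₁ hne₂ fun u v w => by
    obtain ⟨L, hle, hL⟩ := (Submodule.span ℝ {u, v, w} ⊔ S).exists_le_finrank_eq (k := m)
      ((Submodule.finrank_add_le_finrank_add_finrank _ _).trans
        (by rw [hS]; linarith [finrank_span_triple_le (K := ℝ) u v w]))
      (by rw [finrank_euclideanSpace_fin]; omega)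
    obtain ⟨z, c, hc, h⟩ := exists_homotheticSupportOn_of_homothetic_planeProj hne₂
      (hproj 0 L hL (le_sup_right.trans hle))
    exact ⟨z, c, hc, fun x hx => h x (le_sup_left.trans hle hx)⟩
  exact ⟨z, c, hc, h.eq_image hc hne₁ hne₂ hcl₁ hcl₂ hcv₁ hcv₂⟩
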